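/- Let I be a real interval centered at 0 with [−1,1] ⊆ I and let f : Iⁿ → ℝ be a symmetric quasi-Lovász extension, f = Ľ ∘ φ, such that the restriction of f to (I ∩ ℝ₊)ⁿ or to (I ∩ ℝ₋)ⁿ is nonconstant. Then the following are equivalent: (i) f_0 is oddly homogeneous; (ii) there exists A ⊆ [n] such that f_0(1_A) ≠ 0; (iii) φ(1) ≠ 0. In this case, f_0(x·1_A) = (φ(x)/φ(1))·f_0(1_A) for every x ∈ I and every A ⊆ [n]. -/

import Mathlib

open Finset

/-- The indicator tuple `1_A` of a subset `A ⊆ [n]`. -/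
def ind {n : ℕ} (A : Finset (Fin n)) : Fin n → ℝ := fun i => if i ∈ A then 1 else 0

/-- The Möbius transform of a pseudo-Boolean function (viewed as a set function). -/
def mobius {n : ℕ} (ψ : Finset (Fin n) → ℝ) (A : Finset (Fin n)) : ℝ :=
  ∑ B ∈ A.powerset, (-1 : ℝ) ^ (A.card - B.card) * ψ B

/-- `min_{i ∈ A} x i` (with value `0` for `A = ∅`). -/
def minOnFin {n : ℕ} (A : Finset (Fin n)) (x : Fin n → ℝ) : ℝ :=
  if h : A.Nonempty then A.inf' h x else 0

/-- The Lovász extension of a pseudo-Boolean function `ψ` (viewed as a set function):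
`L_ψ(x) = a_ψ(∅) + Σ_{∅ ≠ A ⊆ [n]} a_ψ(A) · min_{i ∈ A} x_i`. -/
def Lov {n : ℕ} (ψ : Finset (Fin n) → ℝ) (x : Fin n → ℝ) : ℝ :=
  mobius ψ ∅ + ∑ A : Finset (Fin n), mobius ψ A * minOnFin A x

/-- `x ∈ ℝⁿ_σ`, i.e. `x_{σ(1)} ≤ ⋯ ≤ x_{σ(n)}`. -/
def inRσ {n : ℕ} (σ : Equiv.Perm (Fin n)) (x : Fin n → ℝ) : Prop :=
  ∀ i j : Fin n, i ≤ j → x (σ i) ≤ x (σ j)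

/-- `A_σ^↑(k) = {σ(j) : j ≥ k}` (0-indexed; `Aup σ n = ∅`). -/
def Aup {n : ℕ} (σ : Equiv.Perm (Fin n)) (k : ℕ) : Finset (Fin n) :=
  (Finset.univ.filter fun j : Fin n => k ≤ (j : ℕ)).image σ

/-- `A_σ^↓(k) = {σ(j) : j < k}` (0-indexed; `Adown σ 0 = ∅`). -/
def Adown {n : ℕ} (σ : Equiv.Perm (Fin n)) (k : ℕ) : Finset (Fin n) :=
  (Finset.univ.filter fun j : Fin n => (j : ℕ) < k).image σ

/-- The symmetric Lovász extension of `ψ`: `Lcheck_ψ(x) = ψ(0) + L_ψ(x⁺) − L_ψ(x⁻)`. -/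
def SLov {n : ℕ} (ψ : Finset (Fin n) → ℝ) (x : Fin n → ℝ) : ℝ :=
  ψ ∅ + Lov ψ (fun i => max (x i) 0) - Lov ψ (fun i => max (-(x i)) 0)

/-- Odd homogeneity of `h : Iⁿ → ℝ` for `I` centered at `0`: there exists a nondecreasing odd
`χ : I → ℝ` such that `h(x·1_A) = χ(x)·h(1_A)` for every `x ∈ I`, `A ⊆ [n]`. -/
def OddlyHom {n : ℕ} (I : Set ℝ) (h : (Fin n → ℝ) → ℝ) : Prop :=
  ∃ χ : ℝ → ℝ, MonotoneOn χ I ∧ (∀ x ∈ I, χ (-x) = -(χ x)) ∧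
    ∀ x ∈ I, ∀ A : Finset (Fin n), h (fun i => x * ind A i) = χ x * h (ind A)

/-!
Along a ray the symmetric Lovász extension is affine: by Möbius inversion
`Ľ_ψ(c·1_A) = ψ(∅) + c·(ψ(A) − ψ(∅))`, and `φ(x·1_A) = φ(x)·1_A` because the odd `φ` fixes `0`.
Hence `f_0(x·1_A) = φ(x)·(ψ(A) − ψ(∅))`. Nonconstancy of `f` forces both `ψ` to be nonconstant
and `φ` not to vanish identically on `I`, so each of the three conditions amounts to `φ(1) ≠ 0`,
and `χ = φ / φ(1)` witnesses odd homogeneity.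
-/

theorem sum_superset_neg_one_pow {α : Type*} [DecidableEq α] {C A : Finset α} (hCA : C ⊆ A) :
    ∑ B ∈ A.powerset with C ⊆ B, (-1 : ℝ) ^ (#B - #C) = if C = A then 1 else 0 := by
  have h : ∑ B ∈ A.powerset with C ⊆ B, (-1 : ℝ) ^ (#B - #C)
      = ∑ D ∈ (A \ C).powerset, ((-1 : ℤ) ^ #D : ℤ) := by
    push_cast
    refine sum_nbij' (· \ C) (· ∪ C) ?_ ?_ ?_ ?_ ?_
    · intro B hB
      simp only [mem_filter, mem_powerset] at hB ⊢
      exact sdiff_subset_sdiff hB.1 le_rfl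
    · intro D hD
      simp only [mem_filter, mem_powerset] at hD ⊢
      exact ⟨union_subset (hD.trans sdiff_subset) hCA, subset_union_right⟩
    · intro B hB
      exact sdiff_union_of_subset (mem_filter.mp hB).2
    · intro D hD
      exact union_sdiff_cancel_right (disjoint_of_subset_left (mem_powerset.mp hD) sdiff_disjoint)
    · intro B hB
      rw [card_sdiff_of_subset (mem_filter.mp hB).2]
  rw [h, sum_powerset_neg_one_pow_card, Int.cast_ite, Int.cast_one, Int.cast_zero]
  refine if_congr ?_ rfl rfl
  rw [sdiff_eq_empty_iff_subset]
  exact ⟨subset_antisymm hCA, fun h => h ▸ subset_rfl⟩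

section Lovasz

variable {n : ℕ} (ψ : Finset (Fin n) → ℝ)

theorem mobius_empty : mobius ψ ∅ = ψ ∅ := by
  simp [mobius]

theorem sum_powerset_mobius (A : Finset (Fin n)) : ∑ B ∈ A.powerset, mobius ψ B = ψ A := by
  unfold mobius
  rw [sum_comm' (t' := A.powerset) (s' := fun C => A.powerset.filter (C ⊆ ·))]
  · simp_rw [← sum_mul]
    rw [sum_eq_single_of_mem A (mem_powerset_self A)]
    · simp [sum_superset_neg_one_pow]
    · intro C hC hCA
      simp [sum_superset_neg_one_pow (mem_powerset.mp hC), hCA]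
  · intro B C
    simp only [mem_powerset, mem_filter]
    exact ⟨fun ⟨hBA, hCB⟩ => ⟨⟨hBA, hCB⟩, hCB.trans hBA⟩, fun ⟨h, _⟩ => h⟩

theorem mobius_const (c : ℝ) {B : Finset (Fin n)} (hB : B.Nonempty) :
    mobius (fun _ => c) B = 0 := by
  have hsign : ∀ C ∈ B.powerset, (-1 : ℝ) ^ (#B - #C) * c = (-1) ^ #B * c * (-1) ^ #C := by
    intro C hC
    rw [pow_sub₀ _ (by norm_num) (card_le_card (mem_powerset.mp hC)), ← inv_pow, inv_neg_one]
    ring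
  have := congrArg (Int.cast : ℤ → ℝ) (sum_powerset_neg_one_pow_card_of_nonempty hB)
  push_cast at this
  rw [mobius, sum_congr rfl hsign, ← mul_sum, this, mul_zero]

theorem minOnFin_smul_ind {c : ℝ} (hc : 0 ≤ c) (A B : Finset (Fin n)) :
    minOnFin B (fun i => c * ind A i) = if B.Nonempty ∧ B ⊆ A then c else 0 := by
  unfold minOnFin
  by_cases hB : B.Nonempty
  · rw [dif_pos hB]
    by_cases hBA : B ⊆ A
    · rw [if_pos ⟨hB, hBA⟩, inf'_congr hB rfl (g := fun _ => c) (fun i hi => by simp [ind, hBA hi]),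
        inf'_const]
    · rw [if_neg (fun h => hBA h.2)]
      obtain ⟨i, hi, hiA⟩ := not_subset.mp hBA
      refine le_antisymm ((inf'_le _ hi).trans (by simp [ind, hiA])) (le_inf' _ _ fun j _ => ?_)
      unfold ind
      split_ifs <;> simp [hc]
  · rw [dif_neg hB, if_neg (fun h => hB h.1)]

theorem Lov_smul_ind {c : ℝ} (hc : 0 ≤ c) (A : Finset (Fin n)) :
    Lov ψ (fun i => c * ind A i) = ψ ∅ + c * (ψ A - ψ ∅) := by
  have hsupp : (univ.filter fun B : Finset (Fin n) => B.Nonempty ∧ B ⊆ A) = A.powerset.erase ∅ := by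
    ext B
    simp [nonempty_iff_ne_empty]
  have hsum : ∑ B ∈ A.powerset.erase ∅, mobius ψ B = ψ A - ψ ∅ := by
    rw [← sum_powerset_mobius ψ A, ← add_sum_erase _ _ (empty_mem_powerset A), mobius_empty]
    ring
  simp_rw [Lov, minOnFin_smul_ind hc, mul_ite, mul_zero, ← sum_filter, hsupp, ← sum_mul, hsum,
    mobius_empty]
  ring

theorem SLov_smul_ind (c : ℝ) (A : Finset (Fin n)) :
    SLov ψ (fun i => c * ind A i) = ψ ∅ + c * (ψ A - ψ ∅) := by
  have hpos : ∀ t : ℝ, (fun i => max (t * ind A i) 0) = fun i => max t 0 * ind A i := by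
    intro t; funext i; unfold ind; split_ifs <;> simp
  simp_rw [SLov, ← neg_mul, hpos, Lov_smul_ind ψ (le_max_right _ 0)]
  rcases le_total c 0 with h | h
  · rw [max_eq_right h, max_eq_left (neg_nonneg.mpr h)]; ring
  · rw [max_eq_left h, max_eq_right (neg_nonpos.mpr h)]; ring

theorem Lov_const (c : ℝ) (x : Fin n → ℝ) : Lov (fun _ => c) x = c := by
  rw [Lov, mobius_empty, sum_eq_zero, add_zero]
  intro B _
  rcases B.eq_empty_or_nonempty with rfl | hB
  · simp [minOnFin]
  · rw [mobius_const c hB, zero_mul]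

theorem SLov_of_forall_eq {c : ℝ} (hψ : ∀ A, ψ A = c) (x : Fin n → ℝ) : SLov ψ x = c := by
  obtain rfl : ψ = fun _ => c := funext hψ
  rw [SLov, Lov_const, Lov_const]
  ring

theorem SLov_zero : SLov ψ (fun _ => 0) = ψ ∅ := by
  simpa using SLov_smul_ind ψ 0 ∅

theorem SLov_comp_smul_ind {φ : ℝ → ℝ} (hφ0 : φ 0 = 0) (x : ℝ) (A : Finset (Fin n)) :
    SLov ψ (fun i => φ (x * ind A i)) = ψ ∅ + φ x * (ψ A - ψ ∅) := by
  have hcomp : (fun i => φ (x * ind A i)) = fun i => φ x * ind A i := by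
    funext i; unfold ind; split_ifs <;> simp [hφ0]
  rw [hcomp, SLov_smul_ind]

theorem exists_ne_empty_of_SLov_ne {u v : Fin n → ℝ} (huv : SLov ψ u ≠ SLov ψ v) :
    ∃ A, ψ A ≠ ψ ∅ := by
  by_contra! hψ
  exact huv ((SLov_of_forall_eq ψ hψ u).trans (SLov_of_forall_eq ψ hψ v).symm)

theorem exists_ne_zero_of_SLov_comp_ne {I : Set ℝ} {φ : ℝ → ℝ} {x y : Fin n → ℝ}
    (hx : ∀ i, x i ∈ I) (hy : ∀ i, y i ∈ I)
    (hxy : SLov ψ (fun i => φ (x i)) ≠ SLov ψ (fun i => φ (y i))) : ∃ t ∈ I, φ t ≠ 0 := by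
  by_contra! hφ
  rw [funext fun i => hφ _ (hx i), funext fun i => hφ _ (hy i)] at hxy
  exact hxy rfl

end Lovasz

section RayFactorization

variable {n : ℕ} {I : Set ℝ} {h : (Fin n → ℝ) → ℝ} {φ : ℝ → ℝ} {d : Finset (Fin n) → ℝ}

theorem apply_ind_eq (h1I : 1 ∈ I) (hray : ∀ x ∈ I, ∀ A, h (fun i => x * ind A i) = φ x * d A)
    (A : Finset (Fin n)) : h (ind A) = φ 1 * d A := by
  simpa using hray 1 h1I A

theorem exists_apply_ind_ne_zero_iff (h1I : 1 ∈ I)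
    (hray : ∀ x ∈ I, ∀ A, h (fun i => x * ind A i) = φ x * d A) (hd : ∃ A, d A ≠ 0) :
    (∃ A, h (ind A) ≠ 0) ↔ φ 1 ≠ 0 := by
  simp_rw [apply_ind_eq h1I hray, mul_ne_zero_iff]
  exact ⟨fun ⟨_, hφ1, _⟩ => hφ1, fun hφ1 => hd.imp fun _ hA => ⟨hφ1, hA⟩⟩

theorem oddlyHom_of_ray (h1I : 1 ∈ I) (hφ : MonotoneOn φ I) (hφodd : ∀ x ∈ I, φ (-x) = -(φ x))
    (hφ1 : 0 < φ 1) (hray : ∀ x ∈ I, ∀ A, h (fun i => x * ind A i) = φ x * d A) :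
    OddlyHom I h := by
  refine ⟨fun x => φ x / φ 1, fun a ha b hb hab => div_le_div_of_nonneg_right (hφ ha hb hab) hφ1.le,
    fun x hx => by simp only [hφodd x hx, neg_div], fun x hx A => ?_⟩
  rw [hray x hx A, apply_ind_eq h1I hray]
  field_simp

theorem ne_zero_of_oddlyHom (h1I : 1 ∈ I)
    (hray : ∀ x ∈ I, ∀ A, h (fun i => x * ind A i) = φ x * d A) (hd : ∃ A, d A ≠ 0)
    (hφ : ∃ x ∈ I, φ x ≠ 0) (hh : OddlyHom I h) : φ 1 ≠ 0 := by
  intro hφ1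
  obtain ⟨χ, -, -, hχ⟩ := hh
  obtain ⟨x, hx, hφx⟩ := hφ
  obtain ⟨A, hA⟩ := hd
  have := hχ x hx A
  rw [hray x hx A, apply_ind_eq h1I hray, hφ1, zero_mul, mul_zero] at this
  exact mul_ne_zero hφx hA this

end RayFactorization

theorem stmt8_general {n : ℕ} (I : Set ℝ) (hI1 : Set.Icc (-1 : ℝ) 1 ⊆ I)
    (f Lcheck : (Fin n → ℝ) → ℝ) (φ : ℝ → ℝ)
    (hL : ∃ ψ : Finset (Fin n) → ℝ, Lcheck = SLov ψ)
    (hφ : MonotoneOn φ I) (hφodd : ∀ x ∈ I, φ (-x) = -(φ x))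
    (hf : ∀ x : Fin n → ℝ, (∀ i, x i ∈ I) → f x = Lcheck (fun i => φ (x i)))
    (hnc : (∃ x y : Fin n → ℝ, (∀ i, x i ∈ I ∩ Set.Ici (0 : ℝ)) ∧
              (∀ i, y i ∈ I ∩ Set.Ici (0 : ℝ)) ∧ f x ≠ f y) ∨
           (∃ x y : Fin n → ℝ, (∀ i, x i ∈ I ∩ Set.Iic (0 : ℝ)) ∧
              (∀ i, y i ∈ I ∩ Set.Iic (0 : ℝ)) ∧ f x ≠ f y)) :
    (OddlyHom I (fun y => f y - f (fun _ => 0)) ↔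
       ∃ A : Finset (Fin n), f (ind A) - f (fun _ => 0) ≠ 0) ∧
    ((∃ A : Finset (Fin n), f (ind A) - f (fun _ => 0) ≠ 0) ↔ φ 1 ≠ 0) ∧
    (φ 1 ≠ 0 → ∀ x ∈ I, ∀ A : Finset (Fin n),
      f (fun i => x * ind A i) - f (fun _ => 0) =
        (φ x / φ 1) * (f (ind A) - f (fun _ => 0))) := by
  obtain ⟨ψ, rfl⟩ := hL
  have h0I : (0 : ℝ) ∈ I := hI1 ⟨by norm_num, by norm_num⟩
  have h1I : (1 : ℝ) ∈ I := hI1 ⟨by norm_num, le_rfl⟩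
  have hφ0 : φ 0 = 0 := by linarith [neg_zero (G := ℝ) ▸ hφodd 0 h0I]
  obtain ⟨u, v, hu, hv, huv⟩ : ∃ u v : Fin n → ℝ, (∀ i, u i ∈ I) ∧ (∀ i, v i ∈ I) ∧
      SLov ψ (fun i => φ (u i)) ≠ SLov ψ (fun i => φ (v i)) := by
    rcases hnc with ⟨u, v, hu, hv, huv⟩ | ⟨u, v, hu, hv, huv⟩ <;>
      exact ⟨u, v, fun i => (hu i).1, fun i => (hv i).1,
        by rwa [← hf u fun i => (hu i).1, ← hf v fun i => (hv i).1]⟩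
  have hψ : ∃ A, ψ A - ψ ∅ ≠ 0 := (exists_ne_empty_of_SLov_ne ψ huv).imp fun _ => sub_ne_zero.mpr
  have hφne := exists_ne_zero_of_SLov_comp_ne ψ hu hv huv
  set h : (Fin n → ℝ) → ℝ := fun y => f y - f (fun _ => 0)
  have hray : ∀ x ∈ I, ∀ A, h (fun i => x * ind A i) = φ x * (ψ A - ψ ∅) := by
    intro x hx A
    have hmem : ∀ i, x * ind A i ∈ I := fun i => by unfold ind; split_ifs <;> simp [hx, h0I]
    show f _ - f _ = _
    rw [hf _ hmem, hf _ fun _ => h0I, SLov_comp_smul_ind ψ hφ0, hφ0, SLov_zero]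
    ring
  have hφ1_nonneg : 0 ≤ φ 1 := hφ0 ▸ hφ h0I h1I zero_le_one
  have hiff := exists_apply_ind_ne_zero_iff h1I hray hψ
  refine ⟨⟨fun hh => hiff.2 (ne_zero_of_oddlyHom h1I hray hψ hφne hh),
    fun hA => oddlyHom_of_ray h1I hφ hφodd (hφ1_nonneg.lt_of_ne' (hiff.1 hA)) hray⟩, hiff,
    fun hφ1 x hx A => ?_⟩
  rw [show f (ind A) - f (fun _ => 0) = φ 1 * (ψ A - ψ ∅) from apply_ind_eq h1I hray A]
  exact (hray x hx A).trans (by field_simp)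

/-- For a symmetric quasi-Lovász extension `f = Lcheck ∘ φ` on `Iⁿ`, `I` centered
at `0` with `[−1,1] ⊆ I`, whose restriction to `(I ∩ ℝ₊)ⁿ` or `(I ∩ ℝ₋)ⁿ` is nonconstant:
(i) `f_0` oddly homogeneous ↔ (ii) `f_0(1_A) ≠ 0` for some `A` ↔ (iii) `φ(1) ≠ 0`;
and in this case `f_0(x·1_A) = (φ(x)/φ(1))·f_0(1_A)`. -/
theorem stmt8 {n : ℕ} (I : Set ℝ) (hI : I.OrdConnected)
    (hsym : ∀ x ∈ I, -x ∈ I) (hI1 : Set.Icc (-1 : ℝ) 1 ⊆ I)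
    (f Lcheck : (Fin n → ℝ) → ℝ) (φ : ℝ → ℝ)
    (hL : ∃ ψ : Finset (Fin n) → ℝ, Lcheck = SLov ψ)
    (hφ : MonotoneOn φ I) (hφodd : ∀ x ∈ I, φ (-x) = -(φ x))
    (hf : ∀ x : Fin n → ℝ, (∀ i, x i ∈ I) → f x = Lcheck (fun i => φ (x i)))
    (hnc : (∃ x y : Fin n → ℝ, (∀ i, x i ∈ I ∩ Set.Ici (0 : ℝ)) ∧
              (∀ i, y i ∈ I ∩ Set.Ici (0 : ℝ)) ∧ f x ≠ f y) ∨
           (∃ x y : Fin n → ℝ, (∀ i, x i ∈ I ∩ Set.Iic (0 : ℝ)) ∧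
              (∀ i, y i ∈ I ∩ Set.Iic (0 : ℝ)) ∧ f x ≠ f y)) :
    (OddlyHom I (fun y => f y - f (fun _ => 0)) ↔
       ∃ A : Finset (Fin n), f (ind A) - f (fun _ => 0) ≠ 0) ∧
    ((∃ A : Finset (Fin n), f (ind A) - f (fun _ => 0) ≠ 0) ↔ φ 1 ≠ 0) ∧
    (φ 1 ≠ 0 → ∀ x ∈ I, ∀ A : Finset (Fin n),
      f (fun i => x * ind A i) - f (fun _ => 0) =
        (φ x / φ 1) * (f (ind A) - f (fun _ => 0))) :=
  stmt8_general I hI1 f Lcheck φ hL hφ hφodd hf hnc
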